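/- (Bound on the center of mass, Gaussian.) Let μ be the centered isotropic Gaussian measure N(0, σ²I_d) on ℝ^d, i.e., the d-fold product of the one-dimensional Gaussian measure with mean 0 and variance σ². Let S ⊆ ℝ^d be a measurable set with μ(S) > 0, and let c_S := (∫_S x dμ(x)) / μ(S) be its center of mass with respect to μ. Then ‖c_S‖ ≤ 2σ · √(μ(ℝ^d \ S)) / μ(S). -/

import Mathlib

open MeasureTheory Metric Set

noncomputable section

/-- The centered isotropic Gaussian measure `N(0, σ²I_d)` on `ℝ^d`, given by the product of
`d` one-dimensional Gaussian densities with mean `0` and variance `σ²`. -/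
def isoGaussianMeasure (d : ℕ) (σ : ℝ) : Measure (EuclideanSpace ℝ (Fin d)) :=
  volume.withDensity fun x =>
    ∏ i : Fin d,
      ENNReal.ofReal ((Real.sqrt (2 * Real.pi * σ ^ 2))⁻¹ *
        Real.exp (-(x i) ^ 2 / (2 * σ ^ 2)))

/-!
Write `y = ∫_S x dμ`. Since `μ` is centered, `‖y‖² = ∫_S ⟪y, x⟫ dμ = -∫_{Sᶜ} ⟪y, x⟫ dμ`, and by
Cauchy–Schwarz on `Sᶜ` this is at most `(∫ ⟪y, x⟫² dμ)^{1/2} μ(Sᶜ)^{1/2} = σ ‖y‖ μ(Sᶜ)^{1/2}`.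
Hence `‖y‖ ≤ σ √μ(Sᶜ)`, which holds for every centered measure with covariance at most `σ² I`.
The density defining `N(0, σ²I_d)` is the product of one-dimensional Gaussian densities, so the
measure is the multivariate Gaussian with covariance matrix `σ² I`.
-/

open ProbabilityTheory Matrix WithLp
open scoped ENNReal NNReal RealInnerProductSpace

namespace MeasureTheory

theorem lintegral_fin_nat_prod_eq_prod {n : ℕ} {E : Fin n → Type*}
    {mE : ∀ i, MeasurableSpace (E i)} {μ : (i : Fin n) → Measure (E i)} [∀ i, SigmaFinite (μ i)]
    {f : (i : Fin n) → E i → ℝ≥0∞} (hf : ∀ i, Measurable (f i)) :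
    ∫⁻ x : (i : Fin n) → E i, ∏ i, f i (x i) ∂(Measure.pi μ) = ∏ i, ∫⁻ x, f i x ∂(μ i) := by
  induction n with
  | zero => simp
  | succ n ih =>
    calc
      _ = ∫⁻ x : E 0 × ((i : Fin n) → E (Fin.succ i)), f 0 x.1 * ∏ i : Fin n, f i.succ (x.2 i)
            ∂((μ 0).prod (Measure.pi fun i ↦ μ i.succ)) := by
        rw [← ((measurePreserving_piFinSuccAbove μ 0).symm).lintegral_comp_emb
          (MeasurableEquiv.measurableEmbedding _) _]
        refine lintegral_congr fun x ↦ ?_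
        simp only [Fin.prod_univ_succ]
        -- `Fin.succAbove 0 i` and `i.succ` agree only definitionally, which `rw` cannot see
        rfl
      _ = (∫⁻ x, f 0 x ∂μ 0) * ∏ i : Fin n, ∫⁻ x, f i.succ x ∂(μ i.succ) := by
        rw [← ih fun i ↦ hf i.succ, ← lintegral_prod_mul (hf 0).aemeasurable]
        exact (Finset.measurable_prod _ fun i _ ↦
          (hf i.succ).comp (measurable_pi_apply i)).aemeasurable
      _ = ∏ i, ∫⁻ x, f i x ∂(μ i) := by rw [Fin.prod_univ_succ]

theorem lintegral_fintype_prod_eq_prod {ι : Type*} [Fintype ι] {E : ι → Type*}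
    {mE : ∀ i, MeasurableSpace (E i)} {μ : (i : ι) → Measure (E i)} [∀ i, SigmaFinite (μ i)]
    {f : (i : ι) → E i → ℝ≥0∞} (hf : ∀ i, Measurable (f i)) :
    ∫⁻ x : (i : ι) → E i, ∏ i, f i (x i) ∂(Measure.pi μ) = ∏ i, ∫⁻ x, f i x ∂(μ i) := by
  let e := (Fintype.equivFin ι).symm
  rw [← (measurePreserving_piCongrLeft _ e).lintegral_comp_emb
    (MeasurableEquiv.measurableEmbedding _) _]
  simp_rw [← e.prod_comp, MeasurableEquiv.coe_piCongrLeft, Equiv.piCongrLeft_apply_apply]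
  exact lintegral_fin_nat_prod_eq_prod fun i ↦ hf (e i)

theorem Measure.pi_withDensity {ι : Type*} [Fintype ι] {E : ι → Type*}
    {mE : ∀ i, MeasurableSpace (E i)} {μ : (i : ι) → Measure (E i)} [∀ i, SigmaFinite (μ i)]
    {f : (i : ι) → E i → ℝ≥0∞} (hf : ∀ i, Measurable (f i))
    [∀ i, SigmaFinite ((μ i).withDensity (f i))] :
    Measure.pi (fun i ↦ (μ i).withDensity (f i)) =
      (Measure.pi μ).withDensity fun x ↦ ∏ i, f i (x i) := by
  refine Measure.pi_eq fun s hs ↦ ?_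
  rw [withDensity_apply _ (MeasurableSet.univ_pi hs), Measure.restrict_pi_pi,
    lintegral_fintype_prod_eq_prod hf]
  simp_rw [withDensity_apply _ (hs _)]

theorem MeasurePreserving.map_withDensity_comp {α β : Type*} [MeasurableSpace α]
    [MeasurableSpace β] {μ : Measure α} {ν : Measure β} {e : α → β} (he : MeasurePreserving e μ ν)
    (hemb : MeasurableEmbedding e) (f : β → ℝ≥0∞) :
    (μ.withDensity (f ∘ e)).map e = ν.withDensity f := by
  ext s hs
  rw [hemb.map_apply, withDensity_apply _ (hemb.measurable hs), withDensity_apply _ hs]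
  exact he.setLIntegral_comp_preimage_emb hemb f s

theorem abs_integral_le_sqrt_integral_sq_mul_sqrt_measureReal {α : Type*} [MeasurableSpace α]
    {μ : Measure α} [IsFiniteMeasure μ] {f : α → ℝ} (hf : MemLp f 2 μ) :
    |∫ x, f x ∂μ| ≤ √(∫ x, f x ^ 2 ∂μ) * √(μ.real univ) := by
  have holder := integral_mul_norm_le_Lp_mul_Lq Real.HolderConjugate.two_two
    (by simpa using hf) (by simpa using memLp_const (μ := μ) (p := 2) (1 : ℝ))
  simp only [norm_one, mul_one, Real.norm_eq_abs, Real.rpow_two, sq_abs, one_pow,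
    integral_const, smul_eq_mul, ← Real.sqrt_eq_rpow] at holder
  exact abs_integral_le_integral_abs.trans holder

end MeasureTheory

namespace ProbabilityTheory

theorem map_toLp_pi_gaussianReal {ι : Type*} [Fintype ι] [DecidableEq ι] (m : ι → ℝ)
    (v : ι → ℝ≥0) :
    (Measure.pi fun i ↦ gaussianReal (m i) (v i)).map (toLp 2) =
      multivariateGaussian (toLp 2 m) (diagonal fun i ↦ (v i : ℝ)) := by
  apply Measure.ext_of_charFun (E := EuclideanSpace ℝ ι)
  ext t
  rw [charFun_pi, charFun_multivariateGaussian]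
  · simp_rw [charFun_gaussianReal, ← Complex.exp_sum]
    congr 1
    simp only [PiLp.inner_apply, mulVec_diagonal, dotProduct, RCLike.inner_apply, conj_trivial,
      Complex.ofReal_sum, Complex.ofReal_mul, Finset.sum_mul, Finset.sum_div,
      ← Finset.sum_sub_distrib]
    refine Finset.sum_congr rfl fun i _ ↦ ?_
    ring
  · exact posSemidef_diagonal_iff.2 fun i ↦ (v i).2

theorem covarianceBilin_multivariateGaussian_diagonal_const {ι : Type*} [Fintype ι]
    [DecidableEq ι] (m : EuclideanSpace ℝ ι) {c : ℝ} (hc : 0 ≤ c) (x y : EuclideanSpace ℝ ι) :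
    covarianceBilin (multivariateGaussian m (diagonal fun _ ↦ c)) x y = c * ⟪x, y⟫ := by
  rw [covarianceBilin_multivariateGaussian (posSemidef_diagonal_iff.2 fun _ ↦ hc),
    PiLp.inner_apply, dotProduct, Finset.mul_sum]
  refine Finset.sum_congr rfl fun i _ ↦ ?_
  simp only [mulVec_diagonal, RCLike.inner_apply, conj_trivial]
  ring

variable {E : Type*} [NormedAddCommGroup E] [InnerProductSpace ℝ E] [CompleteSpace E]
  [MeasurableSpace E] [BorelSpace E]

theorem norm_setIntegral_id_le_of_covarianceBilin_le {μ : Measure E} [IsFiniteMeasure μ]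
    (hμ : MemLp id 2 μ) (hmean : ∫ x, x ∂μ = 0) {σ : ℝ} (hσ : 0 ≤ σ)
    (hcov : ∀ y, covarianceBilin μ y y ≤ σ ^ 2 * ‖y‖ ^ 2) {S : Set E} (hS : MeasurableSet S) :
    ‖∫ x in S, x ∂μ‖ ≤ σ * √(μ.real Sᶜ) := by
  set y := ∫ x in S, x ∂μ
  have hid : Integrable (fun x : E ↦ x) μ := hμ.integrable one_le_two
  have hint : Integrable (fun x ↦ ⟪y, x⟫) μ := hid.const_inner y
  have hmem : MemLp (fun x ↦ ⟪y, x⟫) 2 μ := hμ.const_inner y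
  have hcentered : ∫ x, ⟪y, x⟫ ∂μ = 0 := by
    rw [integral_inner hid, hmean, inner_zero_right]
  have hsecond : ∫ x, ⟪y, x⟫ ^ 2 ∂μ ≤ σ ^ 2 * ‖y‖ ^ 2 := by
    rw [← variance_of_integral_eq_zero hint.aemeasurable hcentered, ← covarianceBilin_self hμ]
    exact hcov y
  have hcompl : ‖y‖ ^ 2 = -∫ x in Sᶜ, ⟪y, x⟫ ∂μ := by
    rw [← real_inner_self_eq_norm_sq, ← integral_inner hid.integrableOn y]
    linarith [integral_add_compl hS hint]
  have key : ‖y‖ ^ 2 ≤ σ * ‖y‖ * √(μ.real Sᶜ) :=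
    calc ‖y‖ ^ 2 ≤ |∫ x in Sᶜ, ⟪y, x⟫ ∂μ| := hcompl ▸ neg_le_abs _
      _ ≤ √(∫ x in Sᶜ, ⟪y, x⟫ ^ 2 ∂μ) * √(μ.real Sᶜ) := by
        simpa using abs_integral_le_sqrt_integral_sq_mul_sqrt_measureReal (hmem.restrict Sᶜ)
      _ ≤ √(σ ^ 2 * ‖y‖ ^ 2) * √(μ.real Sᶜ) := by
        gcongr
        exact (setIntegral_le_integral hmem.integrable_sq (.of_forall fun _ ↦ sq_nonneg _)).trans
          hsecond
      _ = σ * ‖y‖ * √(μ.real Sᶜ) := by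
        rw [Real.sqrt_mul' _ (sq_nonneg _), Real.sqrt_sq hσ, Real.sqrt_sq (norm_nonneg y)]
  rcases (norm_nonneg y).eq_or_lt with hy | hy
  · rw [← hy]; positivity
  · nlinarith

end ProbabilityTheory

theorem isoGaussianMeasure_eq_map_pi_gaussianReal (d : ℕ) {σ : ℝ} (hσ : σ ≠ 0) :
    isoGaussianMeasure d σ =
      (Measure.pi fun _ : Fin d ↦ gaussianReal 0 (σ ^ 2).toNNReal).map (toLp 2) := by
  set v := (σ ^ 2).toNNReal
  have hv : v ≠ 0 := by simpa [v] using hσ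
  have : SigmaFinite (volume.withDensity (gaussianPDF 0 v)) := by
    rw [← gaussianReal_of_var_ne_zero 0 hv]; infer_instance
  calc isoGaussianMeasure d σ
      = volume.withDensity fun x : EuclideanSpace ℝ (Fin d) ↦ ∏ i, gaussianPDF 0 v (x i) := by
        simp only [isoGaussianMeasure, gaussianPDF, gaussianPDFReal, v,
          Real.coe_toNNReal _ (sq_nonneg σ), sub_zero]
    _ = (volume.withDensity fun z : Fin d → ℝ ↦ ∏ i, gaussianPDF 0 v (z i)).map (toLp 2) :=
        ((PiLp.volume_preserving_toLp (Fin d)).map_withDensity_comp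
          (MeasurableEquiv.toLp 2 _).measurableEmbedding _).symm
    _ = _ := by
        rw [gaussianReal_of_var_ne_zero 0 hv,
          Measure.pi_withDensity fun _ ↦ measurable_gaussianPDF 0 v, volume_pi]

theorem isoGaussianMeasure_eq_multivariateGaussian (d : ℕ) {σ : ℝ} (hσ : σ ≠ 0) :
    isoGaussianMeasure d σ = multivariateGaussian 0 (diagonal fun _ : Fin d ↦ σ ^ 2) := by
  rw [isoGaussianMeasure_eq_map_pi_gaussianReal d hσ, map_toLp_pi_gaussianReal]
  simp only [Real.coe_toNNReal _ (sq_nonneg σ)]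
  rfl

theorem center_of_mass_bound_gaussian_general (d : ℕ) (σ : ℝ) (hσ : 0 < σ)
    (S : Set (EuclideanSpace ℝ (Fin d))) (hS : MeasurableSet S) :
    ‖((isoGaussianMeasure d σ S).toReal)⁻¹ •
        ∫ x in S, x ∂(isoGaussianMeasure d σ)‖ ≤
      2 * σ * Real.sqrt ((isoGaussianMeasure d σ Sᶜ).toReal) /
        (isoGaussianMeasure d σ S).toReal := by
  rw [isoGaussianMeasure_eq_multivariateGaussian d hσ.ne']
  set μ := multivariateGaussian 0 (diagonal fun _ : Fin d ↦ σ ^ 2)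
  have hcenter : ‖∫ x in S, x ∂μ‖ ≤ σ * √(μ.real Sᶜ) := by
    refine norm_setIntegral_id_le_of_covarianceBilin_le IsGaussian.memLp_two_id
      integral_id_multivariateGaussian hσ.le (fun y ↦ ?_) hS
    rw [covarianceBilin_multivariateGaussian_diagonal_const 0 (sq_nonneg σ),
      real_inner_self_eq_norm_sq]
  rw [norm_smul, norm_inv, Real.norm_of_nonneg ENNReal.toReal_nonneg, div_eq_inv_mul]
  gcongr
  calc ‖∫ x in S, x ∂μ‖ ≤ σ * √(μ.real Sᶜ) := hcenter
    _ ≤ 2 * σ * √(μ Sᶜ).toReal := by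
      rw [measureReal_def]
      nlinarith [Real.sqrt_nonneg (μ Sᶜ).toReal]

/-- Bound on the center of mass for the Gaussian distribution: if `S` has positive measure
`μ(S)` under `μ = N(0, σ²I_d)`, then its center of mass `c_S` satisfies
`‖c_S‖ ≤ 2σ·√(μ(ℝ^d \ S))/μ(S)`. -/
theorem center_of_mass_bound_gaussian (d : ℕ) (hd : 1 ≤ d) (σ : ℝ) (hσ : 0 < σ)
    (S : Set (EuclideanSpace ℝ (Fin d))) (hS : MeasurableSet S)
    (hpos : 0 < (isoGaussianMeasure d σ S).toReal) :
    ‖((isoGaussianMeasure d σ S).toReal)⁻¹ •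
        ∫ x in S, x ∂(isoGaussianMeasure d σ)‖ ≤
      2 * σ * Real.sqrt ((isoGaussianMeasure d σ Sᶜ).toReal) /
        (isoGaussianMeasure d σ S).toReal :=
  center_of_mass_bound_gaussian_general d σ hσ S hS
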